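/- (Necessity direction of Theorem 1, equation (4.3).) Let X ⊆ ℝⁿ, let u_i : ℝⁿ → ℝᵐ and w_i : ℝⁿ → ℝ^q be continuous policies, and let V : ℝⁿ → ℝ be continuously differentiable and satisfy the linear PDE (LFE) at every point of X. Let f, g, k, h be continuous, let u : ℝ → ℝᵐ and w : ℝ → ℝ^q be continuous, let t ∈ ℝ and Δt > 0, and let x : ℝ → ℝⁿ be differentiable on [t, t+Δt] with x(τ) ∈ X and x'(τ) = f(x(τ)) + g(x(τ))·u(τ) + k(x(τ))·w(τ) for all τ ∈ [t, t+Δt]. Then ∫ₜ^{t+Δt} ⟨∇V(x(τ)), g(x(τ))·(u(τ) − u_i(x(τ)))⟩ dτ + ∫ₜ^{t+Δt} ⟨∇V(x(τ)), k(x(τ))·(w(τ) − w_i(x(τ)))⟩ dτ + V(x(t)) − V(x(t+Δt)) = ∫ₜ^{t+Δt} (‖h(x(τ))‖² + ⟨u_i(x(τ)), R·u_i(x(τ))⟩ − γ²·‖w_i(x(τ))‖²) dτ. -/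

import Mathlib

open Matrix MeasureTheory

/-- Matrix–vector multiplication, valued in Euclidean space. -/
noncomputable def mv {a b : ℕ} (M : Matrix (Fin a) (Fin b) ℝ)
    (v : EuclideanSpace ℝ (Fin b)) : EuclideanSpace ℝ (Fin a) :=
  WithLp.toLp 2 (M.mulVec v)

/-- `V` satisfies the linear PDE (LFE) for the policies `ui, wi` at the point `x`:
`⟨∇V(x), f(x) + g(x) uᵢ(x) + k(x) wᵢ(x)⟩ + ‖h(x)‖² + ⟨uᵢ(x), R uᵢ(x)⟩ - γ²‖wᵢ(x)‖² = 0`. -/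
def LFEAt {n m q p : ℕ}
    (f : EuclideanSpace ℝ (Fin n) → EuclideanSpace ℝ (Fin n))
    (g : EuclideanSpace ℝ (Fin n) → Matrix (Fin n) (Fin m) ℝ)
    (k : EuclideanSpace ℝ (Fin n) → Matrix (Fin n) (Fin q) ℝ)
    (h : EuclideanSpace ℝ (Fin n) → EuclideanSpace ℝ (Fin p))
    (R : Matrix (Fin m) (Fin m) ℝ) (γ : ℝ)
    (ui : EuclideanSpace ℝ (Fin n) → EuclideanSpace ℝ (Fin m))
    (wi : EuclideanSpace ℝ (Fin n) → EuclideanSpace ℝ (Fin q))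
    (V : EuclideanSpace ℝ (Fin n) → ℝ)
    (x : EuclideanSpace ℝ (Fin n)) : Prop :=
  (inner ℝ (gradient V x) (f x + mv (g x) (ui x) + mv (k x) (wi x)) : ℝ)
    + ‖h x‖^2 + (inner ℝ (ui x) (mv R (ui x)) : ℝ) - γ^2 * ‖wi x‖^2 = 0

/-- `V` satisfies the off-policy integral identity (equation (4.3)) for the policies
`ui, wi` along the trajectory `(x, u, w)` on the interval `[t₁, t₂]`. -/
noncomputable def OffPolicyId {n m q p : ℕ}
    (g : EuclideanSpace ℝ (Fin n) → Matrix (Fin n) (Fin m) ℝ)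
    (k : EuclideanSpace ℝ (Fin n) → Matrix (Fin n) (Fin q) ℝ)
    (h : EuclideanSpace ℝ (Fin n) → EuclideanSpace ℝ (Fin p))
    (R : Matrix (Fin m) (Fin m) ℝ) (γ : ℝ)
    (ui : EuclideanSpace ℝ (Fin n) → EuclideanSpace ℝ (Fin m))
    (wi : EuclideanSpace ℝ (Fin n) → EuclideanSpace ℝ (Fin q))
    (V : EuclideanSpace ℝ (Fin n) → ℝ)
    (x : ℝ → EuclideanSpace ℝ (Fin n))
    (u : ℝ → EuclideanSpace ℝ (Fin m))
    (w : ℝ → EuclideanSpace ℝ (Fin q))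
    (t₁ t₂ : ℝ) : Prop :=
  (∫ τ in t₁..t₂, (inner ℝ (gradient V (x τ)) (mv (g (x τ)) (u τ - ui (x τ))) : ℝ))
    + (∫ τ in t₁..t₂, (inner ℝ (gradient V (x τ)) (mv (k (x τ)) (w τ - wi (x τ))) : ℝ))
    + V (x t₁) - V (x t₂)
    = ∫ τ in t₁..t₂,
        (‖h (x τ)‖^2 + (inner ℝ (ui (x τ)) (mv R (ui (x τ))) : ℝ) - γ^2 * ‖wi (x τ)‖^2)


/-!
Along a trajectory the chain rule gives `d/dτ V (x τ) = ⟨∇V (x τ), ẋ τ⟩`. Subtracting the LFE at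
`x τ`, where the same gradient is paired with the closed-loop field of the policies `uᵢ, wᵢ`, leaves
exactly the two off-policy terms `⟨∇V, g (u - uᵢ)⟩ + ⟨∇V, k (w - wᵢ)⟩` minus the running cost;
integrating over `[t, t + Δt]` by the fundamental theorem of calculus gives the identity.
-/

open Set intervalIntegral InnerProductSpace

lemma mv_sub {a b : ℕ} (M : Matrix (Fin a) (Fin b) ℝ) (v₁ v₂ : EuclideanSpace ℝ (Fin b)) :
    mv M (v₁ - v₂) = mv M v₁ - mv M v₂ := by
  ext i
  simp [mv, Matrix.mulVec_sub]

lemma continuous_mv {a b : ℕ} :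
    Continuous fun p : Matrix (Fin a) (Fin b) ℝ × EuclideanSpace ℝ (Fin b) => mv p.1 p.2 :=
  (PiLp.continuous_toLp 2 _).comp <| continuous_fst.matrix_mulVec <|
    (PiLp.continuous_ofLp 2 _).comp continuous_snd

@[fun_prop]
lemma ContinuousOn.mv {α : Type*} [TopologicalSpace α] {a b : ℕ} {s : Set α}
    {M : α → Matrix (Fin a) (Fin b) ℝ} {v : α → EuclideanSpace ℝ (Fin b)}
    (hM : ContinuousOn M s) (hv : ContinuousOn v s) :
    ContinuousOn (fun z => mv (M z) (v z)) s :=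
  continuous_mv.comp_continuousOn (hM.prodMk hv)

lemma ContDiff.continuous_gradient {F : Type*} [NormedAddCommGroup F] [InnerProductSpace ℝ F]
    [CompleteSpace F] {V : F → ℝ} (hV : ContDiff ℝ 1 V) : Continuous (gradient V) :=
  (toDual ℝ F).symm.continuous.comp (hV.continuous_fderiv one_ne_zero)

theorem integral_inner_gradient_comp_eq_sub {F : Type*} [NormedAddCommGroup F]
    [InnerProductSpace ℝ F] [CompleteSpace F] {V : F → ℝ} (hV : Differentiable ℝ V)
    {x x' : ℝ → F} {a b : ℝ} (hx : ∀ τ ∈ uIcc a b, HasDerivAt x (x' τ) τ)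
    (hint : IntervalIntegrable (fun τ => inner ℝ (gradient V (x τ)) (x' τ)) volume a b) :
    ∫ τ in a..b, inner ℝ (gradient V (x τ)) (x' τ) = V (x b) - V (x a) := by
  refine integral_eq_sub_of_hasDerivAt (f := fun τ => V (x τ)) (fun τ hτ => ?_) hint
  rw [inner_gradient_left]
  exact (hV (x τ)).hasFDerivAt.comp_hasDerivAt τ (hx τ hτ)

lemma LFEAt.off_policy_integrand_eq {n m q p : ℕ}
    {f : EuclideanSpace ℝ (Fin n) → EuclideanSpace ℝ (Fin n)}
    {g : EuclideanSpace ℝ (Fin n) → Matrix (Fin n) (Fin m) ℝ}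
    {k : EuclideanSpace ℝ (Fin n) → Matrix (Fin n) (Fin q) ℝ}
    {h : EuclideanSpace ℝ (Fin n) → EuclideanSpace ℝ (Fin p)}
    {R : Matrix (Fin m) (Fin m) ℝ} {γ : ℝ}
    {ui : EuclideanSpace ℝ (Fin n) → EuclideanSpace ℝ (Fin m)}
    {wi : EuclideanSpace ℝ (Fin n) → EuclideanSpace ℝ (Fin q)}
    {V : EuclideanSpace ℝ (Fin n) → ℝ} {y : EuclideanSpace ℝ (Fin n)}
    (hy : LFEAt f g k h R γ ui wi V y) (a : EuclideanSpace ℝ (Fin m))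
    (b : EuclideanSpace ℝ (Fin q)) :
    inner ℝ (gradient V y) (mv (g y) (a - ui y)) + inner ℝ (gradient V y) (mv (k y) (b - wi y))
      = inner ℝ (gradient V y) (f y + mv (g y) a + mv (k y) b)
        + (‖h y‖ ^ 2 + inner ℝ (ui y) (mv R (ui y)) - γ ^ 2 * ‖wi y‖ ^ 2) := by
  have hsplit : mv (g y) (a - ui y) + mv (k y) (b - wi y)
      = (f y + mv (g y) a + mv (k y) b) - (f y + mv (g y) (ui y) + mv (k y) (wi y)) := by
    rw [mv_sub, mv_sub]
    abel
  rw [← inner_add_right, hsplit, inner_sub_right]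
  unfold LFEAt at hy
  linarith

theorem off_policy_identity_of_lfe_general {n m q p : ℕ}
    (f : EuclideanSpace ℝ (Fin n) → EuclideanSpace ℝ (Fin n))
    (g : EuclideanSpace ℝ (Fin n) → Matrix (Fin n) (Fin m) ℝ)
    (k : EuclideanSpace ℝ (Fin n) → Matrix (Fin n) (Fin q) ℝ)
    (h : EuclideanSpace ℝ (Fin n) → EuclideanSpace ℝ (Fin p))
    (R : Matrix (Fin m) (Fin m) ℝ)
    (γ : ℝ)
    (X : Set (EuclideanSpace ℝ (Fin n)))
    (ui : EuclideanSpace ℝ (Fin n) → EuclideanSpace ℝ (Fin m)) (hui : Continuous ui)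
    (wi : EuclideanSpace ℝ (Fin n) → EuclideanSpace ℝ (Fin q)) (hwi : Continuous wi)
    (V : EuclideanSpace ℝ (Fin n) → ℝ) (hV : ContDiff ℝ 1 V)
    (hLFE : ∀ y ∈ X, LFEAt f g k h R γ ui wi V y)
    (hf : Continuous f) (hg : Continuous g) (hk : Continuous k) (hh : Continuous h)
    (u : ℝ → EuclideanSpace ℝ (Fin m)) (hu : Continuous u)
    (w : ℝ → EuclideanSpace ℝ (Fin q)) (hw : Continuous w)
    (t Δt : ℝ) (hΔt : 0 < Δt)
    (x : ℝ → EuclideanSpace ℝ (Fin n))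
    (hxX : ∀ τ ∈ Set.Icc t (t + Δt), x τ ∈ X)
    (hx : ∀ τ ∈ Set.Icc t (t + Δt), HasDerivAt x
      (f (x τ) + mv (g (x τ)) (u τ) + mv (k (x τ)) (w τ)) τ) :
    OffPolicyId g k h R γ ui wi V x u w t (t + Δt) := by
  rw [← uIcc_of_le (by linarith : t ≤ t + Δt)] at hxX hx
  have hxc : ContinuousOn x (uIcc t (t + Δt)) := fun τ hτ =>
    (hx τ hτ).continuousAt.continuousWithinAt
  have hgrad := hV.continuous_gradient
  have hftc := integral_inner_gradient_comp_eq_sub (hV.differentiable one_ne_zero) hx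
    (ContinuousOn.intervalIntegrable (by fun_prop))
  unfold OffPolicyId
  rw [← integral_add (ContinuousOn.intervalIntegrable (by fun_prop))
      (ContinuousOn.intervalIntegrable (by fun_prop)),
    integral_congr fun τ hτ => (hLFE _ (hxX τ hτ)).off_policy_integrand_eq (u τ) (w τ),
    integral_add (ContinuousOn.intervalIntegrable (by fun_prop))
      (ContinuousOn.intervalIntegrable (by fun_prop)), hftc]
  ring

/-- **Necessity direction of Theorem 1 (equation (4.3)).**  If `V` is continuously
differentiable and satisfies the linear PDE (LFE) at every point of `X`, then along any
trajectory of `x' = f(x) + g(x) u(τ) + k(x) w(τ)` remaining in `X` on `[t, t+Δt]`, the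
off-policy integral identity holds. -/
theorem off_policy_identity_of_lfe {n m q p : ℕ}
    (f : EuclideanSpace ℝ (Fin n) → EuclideanSpace ℝ (Fin n))
    (g : EuclideanSpace ℝ (Fin n) → Matrix (Fin n) (Fin m) ℝ)
    (k : EuclideanSpace ℝ (Fin n) → Matrix (Fin n) (Fin q) ℝ)
    (h : EuclideanSpace ℝ (Fin n) → EuclideanSpace ℝ (Fin p))
    (R : Matrix (Fin m) (Fin m) ℝ) (hR : R.PosDef)
    (γ : ℝ) (hγ : 0 < γ)
    (X : Set (EuclideanSpace ℝ (Fin n)))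
    (ui : EuclideanSpace ℝ (Fin n) → EuclideanSpace ℝ (Fin m)) (hui : Continuous ui)
    (wi : EuclideanSpace ℝ (Fin n) → EuclideanSpace ℝ (Fin q)) (hwi : Continuous wi)
    (V : EuclideanSpace ℝ (Fin n) → ℝ) (hV : ContDiff ℝ 1 V)
    (hLFE : ∀ y ∈ X, LFEAt f g k h R γ ui wi V y)
    (hf : Continuous f) (hg : Continuous g) (hk : Continuous k) (hh : Continuous h)
    (u : ℝ → EuclideanSpace ℝ (Fin m)) (hu : Continuous u)
    (w : ℝ → EuclideanSpace ℝ (Fin q)) (hw : Continuous w)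
    (t Δt : ℝ) (hΔt : 0 < Δt)
    (x : ℝ → EuclideanSpace ℝ (Fin n))
    (hxX : ∀ τ ∈ Set.Icc t (t + Δt), x τ ∈ X)
    (hx : ∀ τ ∈ Set.Icc t (t + Δt), HasDerivAt x
      (f (x τ) + mv (g (x τ)) (u τ) + mv (k (x τ)) (w τ)) τ) :
    OffPolicyId g k h R γ ui wi V x u w t (t + Δt) :=
  off_policy_identity_of_lfe_general f g k h R γ X ui hui wi hwi V hV hLFE hf hg hk hh u hu w hw t
    Δt hΔt x hxX hx
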